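/- For δ ∈ (0,1) and an integrable random variable X on an atomless probability space (Ω,Σ,P), CVaR_δ(X) = sup{E_Q[X] : Q ≪ P, dQ/dP ≤ 1/(1-δ)}, i.e., CVaR equals the worst-case expectation over all probability measures whose density with respect to P is bounded by (1-δ)^{-1}. -/

import Mathlib

/-!
If `dQ/dP ≤ c = (1 - δ)⁻¹` and `Q` is a probability measure, then for every `α`
`E_Q X ≤ α + E_Q (X - α)⁺ ≤ α + c E_P (X - α)⁺`, so every such expectation is a lower bound for
the Rockafellar–Uryasev objective. Conversely, let `a` be an upper `(1 - δ)`-quantile of `X`,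
`P(X > a) ≤ 1 - δ ≤ P(X ≥ a)`, and let `w ∈ [0, 1]` equal `1` on `{X > a}`, `0` on `{X < a}` and
a constant on `{X = a}`, chosen so that `E_P w = 1 - δ`. The density `c w` is admissible and
`w X = (X - a)⁺ + a w`, so its expectation of `X` is `a + c E_P (X - a)⁺`. Hence the infimum and
the supremum are both attained, at the same value.
-/

open MeasureTheory Set

/-- `CVaR_δ(X) = min_α [α + (1/(1-δ)) E[(X-α)⁺]]` (Rockafellar–Uryasev form). -/
noncomputable def CVaR {Ω : Type*} [MeasurableSpace Ω] (P : Measure Ω) (δ : ℝ)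
    (X : Ω → ℝ) : ℝ :=
  ⨅ α : ℝ, (α + (1 - δ)⁻¹ * ∫ ω, max (X ω - α) 0 ∂P)

open ProbabilityTheory

theorem StieltjesFunction.exists_leftLim_le_le (f : StieltjesFunction ℝ) {q : ℝ}
    (hbot : ∃ x, f x < q) (htop : ∃ x, q ≤ f x) :
    ∃ a, Function.leftLim f a ≤ q ∧ q ≤ f a := by
  set S := {x | q ≤ f x}
  have hS : BddBelow S := by
    obtain ⟨b, hb⟩ := hbot
    exact ⟨b, fun x hx => le_of_not_ge fun hxb => (hb.trans_le hx).not_ge (f.mono hxb)⟩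
  refine ⟨sInf S, ?_, ?_⟩
  · refine le_of_tendsto (f.mono.tendsto_leftLim _) ?_
    filter_upwards [self_mem_nhdsWithin] with x hx
    exact le_of_not_ge fun hqx => (not_le.2 hx) (csInf_le hS hqx)
  · refine ge_of_tendsto
      ((f.right_continuous _).mono_left (nhdsWithin_mono _ Ioi_subset_Ici_self)) ?_
    filter_upwards [self_mem_nhdsWithin] with x hx
    obtain ⟨s, hs, hsx⟩ := exists_lt_of_csInf_lt htop hx
    exact le_trans hs (f.mono hsx.le)

theorem exists_measureReal_Ioi_le_le_measureReal_Ici (μ : Measure ℝ) [IsProbabilityMeasure μ]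
    {q : ℝ} (hq0 : 0 < q) (hq1 : q < 1) :
    ∃ a, μ.real (Ioi a) ≤ q ∧ q ≤ μ.real (Ici a) := by
  obtain ⟨a, hleft, hright⟩ := (cdf μ).exists_leftLim_le_le (q := 1 - q)
    ((tendsto_cdf_atBot μ).eventually (gt_mem_nhds (by linarith))).exists
    ((tendsto_cdf_atTop μ).eventually (le_mem_nhds (by linarith))).exists
  refine ⟨a, ?_, ?_⟩
  · rw [measureReal_def, ← measure_cdf μ, (cdf μ).measure_Ioi (tendsto_cdf_atTop μ),
      ENNReal.toReal_ofReal']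
    exact max_le (by linarith) hq0.le
  · rw [measureReal_def, ← measure_cdf μ, (cdf μ).measure_Ici (tendsto_cdf_atTop μ),
      ENNReal.toReal_ofReal (by linarith)]
    linarith

section

variable {Ω : Type*} [MeasurableSpace Ω] {P : Measure Ω}

theorem MeasureTheory.Measure.le_smul_of_rnDeriv_le {Q : Measure Ω}
    [Q.HaveLebesgueDecomposition P] (hQP : Q ≪ P) {C : ENNReal}
    (hC : ∀ᵐ ω ∂P, Q.rnDeriv P ω ≤ C) : Q ≤ C • P :=
  calc Q = P.withDensity (Q.rnDeriv P) := (Measure.withDensity_rnDeriv_eq Q P hQP).symm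
    _ ≤ P.withDensity fun _ => C := withDensity_mono hC
    _ = C • P := withDensity_const C

theorem integral_le_add_mul_integral_posPart [IsFiniteMeasure P] {Q : Measure Ω}
    [IsProbabilityMeasure Q] {c : ℝ} (hc : 0 ≤ c) (hQP : Q ≤ ENNReal.ofReal c • P)
    {X : Ω → ℝ} (hX : Integrable X P) (α : ℝ) :
    ∫ ω, X ω ∂Q ≤ α + c * ∫ ω, max (X ω - α) 0 ∂P := by
  have hXα : Integrable (fun ω => max (X ω - α) 0) (ENNReal.ofReal c • P) :=
    ((hX.sub (integrable_const α)).pos_part).smul_measure ENNReal.ofReal_ne_top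
  have hXQ : Integrable X Q := (hX.smul_measure ENNReal.ofReal_ne_top).mono_measure hQP
  calc ∫ ω, X ω ∂Q = α + ∫ ω, X ω - α ∂Q := by
        rw [integral_sub hXQ (integrable_const α)]
        simp
    _ ≤ α + ∫ ω, max (X ω - α) 0 ∂Q := by
        gcongr α + ?_
        exact integral_mono (hXQ.sub (integrable_const α)) (hXα.mono_measure hQP)
          fun ω => le_max_left _ _
    _ ≤ α + ∫ ω, max (X ω - α) 0 ∂(ENNReal.ofReal c • P) := by
        gcongr α + ?_
        exact integral_mono_measure hQP (ae_of_all _ fun ω => le_max_right _ _) hXα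
    _ = α + c * ∫ ω, max (X ω - α) 0 ∂P := by
        rw [integral_smul_measure, smul_eq_mul, ENNReal.toReal_ofReal hc]

theorem exists_upper_tail_weight [IsFiniteMeasure P] {X : Ω → ℝ} (hXm : Measurable X)
    {a q : ℝ} (h₁ : P.real {ω | a < X ω} ≤ q) (h₂ : q ≤ P.real {ω | a ≤ X ω}) :
    ∃ w : Ω → ℝ, Measurable w ∧ (∀ ω, w ω ∈ Icc 0 1) ∧ ∫ ω, w ω ∂P = q ∧
      ∀ ω, w ω * X ω = max (X ω - a) 0 + a * w ω := by
  have hgt : MeasurableSet {ω | a < X ω} := hXm measurableSet_Ioi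
  have hge : MeasurableSet {ω | a ≤ X ω} := hXm measurableSet_Ici
  obtain ⟨s, t, hs, ht, hst, hq⟩ :
      q ∈ segment ℝ (P.real {ω | a < X ω}) (P.real {ω | a ≤ X ω}) := by
    rw [segment_eq_Icc (h₁.trans h₂)]
    exact ⟨h₁, h₂⟩
  refine ⟨fun ω => s * {ω | a < X ω}.indicator 1 ω + t * {ω | a ≤ X ω}.indicator 1 ω,
    by fun_prop, fun ω => ?_, ?_, fun ω => ?_⟩
  · rcases lt_trichotomy a (X ω) with h | h | h
    · simp [h, h.le, hst]
    · simp [h, ht]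
      linarith
    · simp [not_lt.2 h.le, not_le.2 h]
  · have hint : ∀ {A : Set Ω}, MeasurableSet A → Integrable (A.indicator (1 : Ω → ℝ)) P :=
      fun hA => (integrable_const (1 : ℝ)).indicator hA
    beta_reduce
    rw [integral_add ((hint hgt).const_mul s) ((hint hge).const_mul t), integral_const_mul,
      integral_const_mul, integral_indicator_one hgt, integral_indicator_one hge, ← hq,
      smul_eq_mul, smul_eq_mul]
  · rcases lt_trichotomy a (X ω) with h | rfl | h
    · simp [h, h.le, hst]
    · simp
      ring
    · simp [not_lt.2 h.le, not_le.2 h, h.le]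

theorem isProbabilityMeasure_withDensity_ofReal {g : Ω → ℝ} (hg : Integrable g P)
    (hg0 : 0 ≤ᵐ[P] g) (h1 : ∫ ω, g ω ∂P = 1) :
    IsProbabilityMeasure (P.withDensity fun ω => ENNReal.ofReal (g ω)) :=
  ⟨by rw [withDensity_apply _ MeasurableSet.univ, Measure.restrict_univ,
    ← ofReal_integral_eq_lintegral_ofReal hg hg0, h1, ENNReal.ofReal_one]⟩

theorem integral_withDensity_ofReal {g : Ω → ℝ} (hgm : Measurable g) (hg0 : ∀ ω, 0 ≤ g ω)
    (f : Ω → ℝ) :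
    ∫ ω, f ω ∂P.withDensity (fun ω => ENNReal.ofReal (g ω)) = ∫ ω, g ω * f ω ∂P := by
  rw [integral_withDensity_eq_integral_toReal_smul (by fun_prop)
    (ae_of_all _ fun _ => ENNReal.ofReal_lt_top)]
  simp [ENNReal.toReal_ofReal (hg0 _)]

theorem exists_bounded_density_integral_eq [IsFiniteMeasure P] {X : Ω → ℝ} (hX : Integrable X P)
    (hXm : Measurable X) {a q : ℝ} (hq : 0 < q) (h₁ : P.real {ω | a < X ω} ≤ q)
    (h₂ : q ≤ P.real {ω | a ≤ X ω}) :
    ∃ Q : Measure Ω, IsProbabilityMeasure Q ∧ Q ≪ P ∧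
      (∀ᵐ ω ∂P, Q.rnDeriv P ω ≤ ENNReal.ofReal q⁻¹) ∧
      ∫ ω, X ω ∂Q = a + q⁻¹ * ∫ ω, max (X ω - a) 0 ∂P := by
  obtain ⟨w, hwm, hw, hwq, hwX⟩ := exists_upper_tail_weight hXm h₁ h₂
  have hwint : Integrable w P := .of_mem_Icc 0 1 hwm.aemeasurable (ae_of_all _ hw)
  have hg0 : ∀ ω, 0 ≤ q⁻¹ * w ω := fun ω => mul_nonneg (inv_nonneg.2 hq.le) (hw ω).1
  refine ⟨P.withDensity fun ω => ENNReal.ofReal (q⁻¹ * w ω), ?_,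
    withDensity_absolutelyContinuous _ _, ?_, ?_⟩
  · refine isProbabilityMeasure_withDensity_ofReal (hwint.const_mul _) (ae_of_all _ hg0) ?_
    rw [integral_const_mul, hwq, inv_mul_cancel₀ hq.ne']
  · filter_upwards [Measure.rnDeriv_withDensity P (hwm.const_mul q⁻¹).ennreal_ofReal] with ω h
    rw [h]
    exact ENNReal.ofReal_le_ofReal (mul_le_of_le_one_right (inv_nonneg.2 hq.le) (hw ω).2)
  · have hXa : Integrable (fun ω => max (X ω - a) 0) P := (hX.sub (integrable_const a)).pos_part
    rw [integral_withDensity_ofReal (by fun_prop) hg0]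
    simp_rw [mul_assoc, hwX]
    rw [integral_const_mul, integral_add hXa (hwint.const_mul a), integral_const_mul, hwq]
    field_simp
    ring

end

theorem CVaR_eq_sup_density_bounded_general {Ω : Type*} [MeasurableSpace Ω] (P : Measure Ω)
    [IsProbabilityMeasure P] (X : Ω → ℝ) (hX : Integrable X P)
    (hXm : Measurable X) (δ : ℝ) (hδ : δ ∈ Set.Ioo (0 : ℝ) 1) :
    CVaR P δ X = sSup {r : ℝ | ∃ Q : Measure Ω, IsProbabilityMeasure Q ∧ Q ≪ P ∧
      (∀ᵐ ω ∂P, Q.rnDeriv P ω ≤ ENNReal.ofReal (1 - δ)⁻¹) ∧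
      r = ∫ ω, X ω ∂Q} := by
  obtain ⟨hδ0, hδ1⟩ := hδ
  set S := {r : ℝ | ∃ Q : Measure Ω, IsProbabilityMeasure Q ∧ Q ≪ P ∧
      (∀ᵐ ω ∂P, Q.rnDeriv P ω ≤ ENNReal.ofReal (1 - δ)⁻¹) ∧ r = ∫ ω, X ω ∂Q}
  set g : ℝ → ℝ := fun α => α + (1 - δ)⁻¹ * ∫ ω, max (X ω - α) 0 ∂P
  have hbound : ∀ r ∈ S, ∀ α, r ≤ g α := by
    rintro _ ⟨Q, hQ, hQP, hQbd, rfl⟩ α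
    exact integral_le_add_mul_integral_posPart (inv_nonneg.2 (by linarith))
      (Measure.le_smul_of_rnDeriv_le hQP hQbd) hX α
  have : IsProbabilityMeasure (P.map X) := Measure.isProbabilityMeasure_map hXm.aemeasurable
  obtain ⟨a, h₁, h₂⟩ :=
    exists_measureReal_Ioi_le_le_measureReal_Ici (P.map X) (q := 1 - δ) (by linarith) (by linarith)
  rw [map_measureReal_apply hXm measurableSet_Ioi] at h₁
  rw [map_measureReal_apply hXm measurableSet_Ici] at h₂
  obtain ⟨Q₀, hQ₀, hQ₀P, hQ₀bd, hQ₀X⟩ :=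
    exists_bounded_density_integral_eq hX hXm (by linarith) h₁ h₂
  have hmem : g a ∈ S := ⟨Q₀, hQ₀, hQ₀P, hQ₀bd, hQ₀X.symm⟩
  calc CVaR P δ X = g a :=
        (IsLeast.isGLB ⟨mem_range_self a, forall_mem_range.2 (hbound _ hmem)⟩).ciInf_eq
    _ = sSup S := (IsGreatest.csSup_eq ⟨hmem, fun r hr => hbound r hr a⟩).symm

/-- on an atomless probability space, `CVaR_δ(X)` equals the worst-case
expectation `sup {E_Q[X] : Q ≪ P, dQ/dP ≤ (1-δ)⁻¹}`. -/
theorem CVaR_eq_sup_density_bounded {Ω : Type*} [MeasurableSpace Ω] (P : Measure Ω)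
    [IsProbabilityMeasure P] [NullSingletonClass P] (X : Ω → ℝ) (hX : Integrable X P)
    (hXm : Measurable X) (δ : ℝ) (hδ : δ ∈ Set.Ioo (0 : ℝ) 1) :
    CVaR P δ X = sSup {r : ℝ | ∃ Q : Measure Ω, IsProbabilityMeasure Q ∧ Q ≪ P ∧
      (∀ᵐ ω ∂P, Q.rnDeriv P ω ≤ ENNReal.ofReal (1 - δ)⁻¹) ∧
      r = ∫ ω, X ω ∂Q} :=
  CVaR_eq_sup_density_bounded_general P X hX hXm δ hδ
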